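/- arXiv:1807.02688 — 2 statements merged into one kernel-verified Lean document; each statement's English description precedes it below -/
import Mathlib

section
/- Let v_1, …, v_n be users with nonnegative values I_1 ≥ I_2 ≥ … ≥ I_n and acceptance probabilities p_1, …, p_n ∈ [0,1]. Consider probing the users one by one in a given order, stopping at the first user who accepts (user v_i accepts independently with probability p_i), and receiving value I_i of the accepting user (0 if all reject). Then the expected value of the ordering that probes users in non-increasing order of I_i is at least the expected value of any other ordering. -/
/-!
Probing in order `σ`, user `i` is the first to accept with probability
`w_σ i = firstSuccessProb (p ∘ σ) (σ⁻¹ i)`, and the expected value is `∑ i, w_σ i * I i`.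
For each prefix `{0, …, m}` of users, the first acceptor lies in the prefix only if some user
of the prefix accepts, so `∑ i ≤ m, w_σ i ≤ 1 - ∏ i ≤ m, (1 - p i)`, with equality for the
identity order, which probes that prefix first. For the whole set of users equality holds for
every `σ`. Since `I` is antitone, Abel summation turns these prefix inequalities into the claim.
-/

open Finset

namespace Fin

variable {R : Type*} [CommRing R] [PartialOrder R] [IsOrderedRing R]

theorem sum_mul_nonneg_of_sum_Iic_nonneg {n : ℕ} {c f : Fin n → R} (hf : Antitone f)
    (hf0 : ∀ i, 0 ≤ f i) (hc : ∀ m, 0 ≤ ∑ i ∈ Iic m, c i) : 0 ≤ ∑ i, c i * f i := by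
  induction n with
  | zero => simp
  | succ n ih =>
    have htail : 0 ≤ ∑ i : Fin n, c i.castSucc * (f i.castSucc - f (last n)) :=
      ih (fun i j hij => sub_le_sub_right (hf (castSucc_le_castSucc_iff.2 hij)) _)
        (fun i => sub_nonneg.2 (hf (le_last _))) (fun m => by rw [← sum_Iic_castSucc]; exact hc _)
    have hsplit : ∑ i, c i * f i =
        ∑ i : Fin n, c i.castSucc * (f i.castSucc - f (last n)) +
          (∑ i ∈ Iic (last n), c i) * f (last n) := by
      rw [show Iic (last n) = univ from Iic_top, sum_univ_castSucc, sum_univ_castSucc, add_mul,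
        sum_mul]
      simp only [mul_sub, sum_sub_distrib]
      ring
    rw [hsplit]
    exact add_nonneg htail (mul_nonneg (hc _) (hf0 _))

theorem sum_mul_le_sum_mul_of_sum_Iic_le {n : ℕ} {a b f : Fin n → R} (hf : Antitone f)
    (hab : ∀ m, ∑ i ∈ Iic m, a i ≤ ∑ i ∈ Iic m, b i) (htot : ∑ i, a i = ∑ i, b i) :
    ∑ i, a i * f i ≤ ∑ i, b i * f i := by
  cases n with
  | zero => simp
  | succ n =>
    have key := sum_mul_nonneg_of_sum_Iic_nonneg (c := b - a) (f := fun i => f i - f (last n))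
      (fun i j hij => sub_le_sub_right (hf hij) _) (fun i => sub_nonneg.2 (hf (le_last i)))
      (fun m => by simpa only [Pi.sub_apply, sum_sub_distrib, sub_nonneg] using hab m)
    have hsplit : ∑ i, (b - a) i * (f i - f (last n)) =
        ∑ i, b i * f i - ∑ i, a i * f i - (∑ i, b i - ∑ i, a i) * f (last n) := by
      simp only [Pi.sub_apply, sub_mul, mul_sub, sum_sub_distrib, sum_mul]
    rw [hsplit, htot, sub_self, zero_mul, sub_zero, sub_nonneg] at key
    exact key

end Fin

section FirstSuccess

variable {ι R : Type*} [LinearOrder ι] [LocallyFiniteOrderBot ι] [CommRing R]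

/-- The probability that trial `k` is the first success, when the trials are independent and
trial `j` succeeds with probability `q j`. -/
def firstSuccessProb (q : ι → R) (k : ι) : R :=
  (∏ j ∈ Iio k, (1 - q j)) * q k

theorem sum_firstSuccessProb_of_isLowerSet (q : ι → R) {K : Finset ι}
    (hK : IsLowerSet (K : Set ι)) :
    ∑ k ∈ K, firstSuccessProb q k = 1 - ∏ k ∈ K, (1 - q k) := by
  rw [prod_one_sub_ordered, sub_sub_cancel]
  refine sum_congr rfl fun k hk => ?_
  have hprefix : {j ∈ K | j < k} = Iio k := by
    ext j
    simpa [mem_filter, mem_Iio] using fun hjk : j < k => hK hjk.le hk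
  rw [firstSuccessProb, hprefix, mul_comm]

theorem sum_firstSuccessProb_univ [Fintype ι] (q : ι → R) :
    ∑ k, firstSuccessProb q k = 1 - ∏ k, (1 - q k) :=
  sum_firstSuccessProb_of_isLowerSet q (by simpa only [coe_univ] using isLowerSet_univ)

theorem sum_firstSuccessProb_comp_symm [Fintype ι] (q : ι → R) (σ : Equiv.Perm ι) :
    ∑ i, firstSuccessProb (q ∘ σ) (σ.symm i) = 1 - ∏ i, (1 - q i) := by
  rw [σ.symm.sum_comp, sum_firstSuccessProb_univ]
  exact congrArg (1 - ·) (Equiv.prod_comp σ (fun i => 1 - q i))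

variable [PartialOrder R] [IsOrderedRing R]

theorem sum_firstSuccessProb_le {q : ι → R} (hq0 : ∀ i, 0 ≤ q i) (hq1 : ∀ i, q i ≤ 1)
    (K : Finset ι) :
    ∑ k ∈ K, firstSuccessProb q k ≤ 1 - ∏ k ∈ K, (1 - q k) := by
  rw [prod_one_sub_ordered, sub_sub_cancel]
  refine sum_le_sum fun k _ => ?_
  rw [firstSuccessProb, mul_comm]
  refine mul_le_mul_of_nonneg_left ?_ (hq0 k)
  exact prod_le_prod_of_subset_of_le_one (fun j hj => mem_Iio.2 (mem_filter.1 hj).2)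
    (fun j _ => sub_nonneg.2 (hq1 j)) (fun j _ _ => sub_le_self _ (hq0 j))

theorem sum_firstSuccessProb_comp_symm_le {q : ι → R} (hq0 : ∀ i, 0 ≤ q i)
    (hq1 : ∀ i, q i ≤ 1) (σ : Equiv.Perm ι) (S : Finset ι) :
    ∑ i ∈ S, firstSuccessProb (q ∘ σ) (σ.symm i) ≤ 1 - ∏ i ∈ S, (1 - q i) := by
  simpa [sum_map, prod_map] using
    sum_firstSuccessProb_le (q := q ∘ σ) (fun i => hq0 _) (fun i => hq1 _)
      (S.map σ.symm.toEmbedding)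

end FirstSuccess

theorem stmt_4_general (n : ℕ) (I p : Fin n → ℝ)
    (hIanti : ∀ i j : Fin n, i ≤ j → I j ≤ I i)
    (hp0 : ∀ i, 0 ≤ p i) (hp1 : ∀ i, p i ≤ 1)
    (σ : Equiv.Perm (Fin n)) :
    ∑ k : Fin n, (∏ j ∈ Finset.Iio k, (1 - p (σ j))) * p (σ k) * I (σ k) ≤
      ∑ k : Fin n, (∏ j ∈ Finset.Iio k, (1 - p j)) * p k * I k := by
  change ∑ k, firstSuccessProb (p ∘ σ) k * I (σ k) ≤ ∑ k, firstSuccessProb p k * I k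
  rw [← σ.symm.sum_comp]
  simp only [Equiv.apply_symm_apply]
  refine Fin.sum_mul_le_sum_mul_of_sum_Iic_le hIanti (fun m => ?_) ?_
  · rw [sum_firstSuccessProb_of_isLowerSet p (by simpa only [coe_Iic] using isLowerSet_Iic m)]
    exact sum_firstSuccessProb_comp_symm_le hp0 hp1 σ (Iic m)
  · rw [sum_firstSuccessProb_comp_symm, sum_firstSuccessProb_univ]

theorem stmt_4 (n : ℕ) (I p : Fin n → ℝ)
    (hIanti : ∀ i j : Fin n, i ≤ j → I j ≤ I i)
    (hInn : ∀ i, 0 ≤ I i)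
    (hp0 : ∀ i, 0 ≤ p i) (hp1 : ∀ i, p i ≤ 1)
    (σ : Equiv.Perm (Fin n)) :
    ∑ k : Fin n, (∏ j ∈ Finset.Iio k, (1 - p (σ j))) * p (σ k) * I (σ k) ≤
      ∑ k : Fin n, (∏ j ∈ Finset.Iio k, (1 - p j)) * p k * I k :=
  stmt_4_general n I p hIanti hp0 hp1 σ
end

section
/- For n users with values I_1, …, I_n ≥ 0 and acceptance probabilities p_1, …, p_n ∈ [0,1], probed in a fixed order and stopping at the first acceptance, the expected value Σ_{k=1}^{n} (Π_{j<k}(1 − p_j)) p_k I_k is a nondecreasing function of each p_z, provided I_z ≥ I_k for all k > z (i.e., users are probed in non-increasing order of value). -/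
/-!
Split the probe order at `z`: the expected value is `A + C * (p z * I z + (1 - p z) * S)`, where
`A` and `C` only involve the users before `z` and `S` is the expected value of probing the users
after `z`. The weights in `S` form a sub-probability vector, so `S ≤ I z`, and the expression is
nondecreasing in `p z`.
-/

open Finset

namespace Finset

variable {ι M : Type*} [LinearOrder ι] [CommMonoid M]

@[to_additive]
theorem prod_eq_prod_lt_mul_mul_prod_gt {s : Finset ι} {z : ι} (hz : z ∈ s) (f : ι → M) :
    ∏ i ∈ s, f i = (∏ i ∈ s with i < z, f i) * f z * ∏ i ∈ s with z < i, f i := by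
  have hge : ({i ∈ s | ¬i < z} : Finset ι) = insert z {i ∈ s | z < i} := by
    ext i
    simp only [mem_filter, mem_insert, not_lt]
    constructor
    · rintro ⟨hi, hzi⟩
      exact hzi.eq_or_lt.imp Eq.symm fun h => ⟨hi, h⟩
    · rintro (rfl | ⟨hi, hzi⟩)
      exacts [⟨hz, le_rfl⟩, ⟨hi, hzi.le⟩]
  rw [← prod_filter_mul_prod_filter_not s (· < z), hge, prod_insert (by simp), mul_assoc]

end Finset

section Probing

variable {ι : Type*} [LinearOrder ι]

def probeValue (s : Finset ι) (t I : ι → ℝ) : ℝ :=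
  ∑ k ∈ s, (∏ j ∈ s with j < k, (1 - t j)) * t k * I k

theorem probeValue_congr {s : Finset ι} {t t' : ι → ℝ} (I : ι → ℝ) (h : ∀ i ∈ s, t i = t' i) :
    probeValue s t I = probeValue s t' I := by
  refine sum_congr rfl fun k hk => ?_
  rw [prod_congr rfl fun j hj => by rw [h j (mem_filter.1 hj).1], h k hk]

theorem probeValue_le {s : Finset ι} {t I : ι → ℝ} {M : ℝ} (ht : ∀ i ∈ s, 0 ≤ t i ∧ t i ≤ 1)
    (hI : ∀ i ∈ s, I i ≤ M) (hM : 0 ≤ M) : probeValue s t I ≤ M := by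
  have hprod : ∀ u ⊆ s, 0 ≤ ∏ j ∈ u, (1 - t j) := fun u hu =>
    prod_nonneg fun j hj => sub_nonneg.2 (ht j (hu hj)).2
  calc probeValue s t I ≤ ∑ k ∈ s, (∏ j ∈ s with j < k, (1 - t j)) * t k * M :=
        sum_le_sum fun k hk => mul_le_mul_of_nonneg_left (hI k hk)
          (mul_nonneg (hprod _ (filter_subset _ _)) (ht k hk).1)
    _ = (1 - ∏ j ∈ s, (1 - t j)) * M := by
        rw [← sum_mul, prod_one_sub_ordered]
        simp only [mul_comm, sub_sub_cancel]
    _ ≤ M := mul_le_of_le_one_left hM (sub_le_self _ (hprod s subset_rfl))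

theorem probeValue_eq_of_mem {s : Finset ι} {z : ι} (hz : z ∈ s) (t I : ι → ℝ) :
    probeValue s t I = probeValue {i ∈ s | i < z} t I + (∏ j ∈ s with j < z, (1 - t j)) *
      (t z * I z + (1 - t z) * probeValue {i ∈ s | z < i} t I) := by
  set C := ∏ j ∈ s with j < z, (1 - t j)
  have hbefore : ∀ k ∈ {i ∈ s | i < z},
      {j ∈ s | j < k} = {j ∈ {i ∈ s | i < z} | j < k} := fun k hk => by
    rw [filter_filter]
    exact filter_congr fun j _ => ⟨fun hjk => ⟨hjk.trans (mem_filter.1 hk).2, hjk⟩, And.right⟩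
  have hafter : ∀ k ∈ {i ∈ s | z < i}, ∏ j ∈ s with j < k, (1 - t j) =
      C * (1 - t z) * ∏ j ∈ {i ∈ s | z < i} with j < k, (1 - t j) := fun k hk => by
    have hzk := (mem_filter.1 hk).2
    have hlt : {j ∈ s | j < k ∧ j < z} = {j ∈ s | j < z} :=
      filter_congr fun j _ => ⟨And.right, fun hjz => ⟨hjz.trans hzk, hjz⟩⟩
    have hgt : {j ∈ s | j < k ∧ z < j} = {j ∈ s | z < j ∧ j < k} :=
      filter_congr fun j _ => And.comm
    rw [prod_eq_prod_lt_mul_mul_prod_gt (mem_filter.2 ⟨hz, hzk⟩), filter_filter, filter_filter,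
      filter_filter, hlt, hgt]
  rw [probeValue, sum_eq_sum_lt_add_add_sum_gt hz, probeValue, probeValue, mul_add, mul_sum,
    mul_sum, ← add_assoc]
  congr 1
  · congr 1
    · exact sum_congr rfl fun k hk => by rw [hbefore k hk]
    · ring
  · exact sum_congr rfl fun k hk => by rw [hafter k hk]; ring

theorem probeValue_univ [Fintype ι] [LocallyFiniteOrderBot ι] (t I : ι → ℝ) :
    probeValue univ t I = ∑ k, (∏ j ∈ Iio k, (1 - t j)) * t k * I k := by
  simp only [probeValue, filter_gt_eq_Iio]

end Probing

theorem stmt_5_general (n : ℕ) (I : Fin n → ℝ) (hInn : ∀ i, 0 ≤ I i) (z : Fin n)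
    (hIz : ∀ k : Fin n, z < k → I k ≤ I z)
    (p q : Fin n → ℝ)
    (hq : ∀ i, 0 ≤ q i ∧ q i ≤ 1)
    (hagree : ∀ i : Fin n, i ≠ z → p i = q i) (hz : p z ≤ q z) :
    ∑ k : Fin n, (∏ j ∈ Finset.Iio k, (1 - p j)) * p k * I k ≤
      ∑ k : Fin n, (∏ j ∈ Finset.Iio k, (1 - q j)) * q k * I k := by
  have hbefore : ∀ i ∈ ({i | i < z} : Finset (Fin n)), p i = q i := fun i hi =>
    hagree i (mem_filter.1 hi).2.ne
  have hafter : ∀ i ∈ ({i | z < i} : Finset (Fin n)), p i = q i := fun i hi =>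
    hagree i (mem_filter.1 hi).2.ne'
  rw [← probeValue_univ, ← probeValue_univ, probeValue_eq_of_mem (mem_univ z),
    probeValue_eq_of_mem (mem_univ z), probeValue_congr I hbefore, probeValue_congr I hafter,
    prod_congr rfl fun j hj => by rw [hbefore j hj]]
  have hC : 0 ≤ ∏ j ∈ univ with j < z, (1 - q j) := prod_nonneg fun j _ => sub_nonneg.2 (hq j).2
  have hS : probeValue {i | z < i} q I ≤ I z :=
    probeValue_le (fun i _ => hq i) (fun k hk => hIz k (mem_filter.1 hk).2) (hInn z)
  refine add_le_add_right (mul_le_mul_of_nonneg_left ?_ hC) _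
  nlinarith [mul_nonneg (sub_nonneg.2 hz) (sub_nonneg.2 hS)]

theorem stmt_5 (n : ℕ) (I : Fin n → ℝ) (hInn : ∀ i, 0 ≤ I i) (z : Fin n)
    (hIz : ∀ k : Fin n, z < k → I k ≤ I z)
    (p q : Fin n → ℝ)
    (hp : ∀ i, 0 ≤ p i ∧ p i ≤ 1) (hq : ∀ i, 0 ≤ q i ∧ q i ≤ 1)
    (hagree : ∀ i : Fin n, i ≠ z → p i = q i) (hz : p z ≤ q z) :
    ∑ k : Fin n, (∏ j ∈ Finset.Iio k, (1 - p j)) * p k * I k ≤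
      ∑ k : Fin n, (∏ j ∈ Finset.Iio k, (1 - q j)) * q k * I k :=
  stmt_5_general n I hInn z hIz p q hq hagree hz
end
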